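/- For y ∈ (0,1), the integral of log x against the Marčenko–Pastur density with ratio y equals ((y−1)/y)·log(1−y) − 1: ∫_{a₋}^{a₊} log(x) p_y(x) dx = (y−1)/y · log(1−y) − 1. -/

import Mathlib

/-!
Write `R x = √((x - a) * (b - x))` and `m = (a + b) / 2`. Since `R² = (x - a)(b - x)`,
`log x * R / x = log x * (m - x) / R + m * log x / R - a * b * log x / (x * R)`.
The first term integrates by parts, `(m - x) / R` being `R'`, to `-∫ R / x`; all other
integrals are of the form `∫ g / R` or `∫ g / (x * R)`. The Chebyshev substitution
`x = m - (b - a) / 2 * cos θ` turns `∫ g / R` into `∫₀^π g (x θ) dθ`, and the inversion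
`x ↦ a * b / x`, which exchanges `a` and `b`, turns `∫ g / (x * R)` into
`(a * b)^(-1/2) * ∫ g (a * b / x) / R`.
On the Marčenko–Pastur support `(1 ∓ √y)²` we get `m = 1 + y`, `√(a * b) = 1 - y`, and the
only transcendental integral left, `∫₀^π log (1 + y - 2 √y cos θ) dθ`, vanishes by the mean
value property of `log |z - √y|` on the unit circle.
-/

open Real intervalIntegral MeasureTheory Set

theorem norm_circleMap_sub_ofReal_sq (r θ : ℝ) :
    ‖circleMap 0 1 θ - r‖ ^ 2 = 1 + r ^ 2 - 2 * r * cos θ := by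
  rw [Complex.sq_norm, Complex.normSq_apply]
  simp only [circleMap, Complex.ofReal_one, one_mul, zero_add, Complex.sub_re, Complex.sub_im,
    Complex.exp_ofReal_mul_I_re, Complex.exp_ofReal_mul_I_im, Complex.ofReal_re,
    Complex.ofReal_im, sub_zero]
  nlinarith [sin_sq_add_cos_sq θ]

theorem integral_log_one_add_sq_sub_two_mul_cos {r : ℝ} (hr : |r| ≤ 1) :
    ∫ θ in 0..π, log (1 + r ^ 2 - 2 * r * cos θ) = 0 := by
  set f : ℝ → ℝ := fun θ ↦ log (1 + r ^ 2 - 2 * r * cos θ)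
  have hf : f = fun θ ↦ 2 * log ‖circleMap 0 1 θ - r‖ := by
    ext θ
    simp only [f, ← norm_circleMap_sub_ofReal_sq, log_pow, Nat.cast_ofNat]
  have hint : IntervalIntegrable f volume 0 (2 * π) := by
    rw [hf]
    exact (circleIntegrable_log_norm_sub_const (c := 0) (a := (r : ℂ)) 1).const_mul 2
  have hfull : ∫ θ in 0..2 * π, f θ = 0 := by
    have h := circleAverage_log_norm_sub_const_of_mem_closedBall (c := 0) (R := 1) (a := (r : ℂ))
      (by simpa using hr)
    rw [circleAverage_def, log_one, smul_eq_mul, mul_eq_zero] at h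
    rw [hf, intervalIntegral.integral_const_mul, mul_eq_zero]
    exact Or.inr (h.resolve_left (by positivity))
  have hsymm : ∫ θ in π..2 * π, f θ = ∫ θ in 0..π, f θ := by
    have h := intervalIntegral.integral_comp_sub_left f (2 * π) (a := 0) (b := π)
    rw [show 2 * π - π = π by ring, sub_zero] at h
    rw [← h]
    congr 1 with θ
    simp only [f, cos_two_pi_sub]
  have hπ : π ∈ uIcc 0 (2 * π) := by
    rw [uIcc_of_le (by positivity)]; constructor <;> linarith [pi_pos]
  have hsplit := intervalIntegral.integral_add_adjacent_intervals
    (hint.mono_set (uIcc_subset_uIcc left_mem_uIcc hπ))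
    (hint.mono_set (uIcc_subset_uIcc hπ right_mem_uIcc))
  rw [hsymm, hfull] at hsplit
  linarith

noncomputable def semicircle (a b x : ℝ) : ℝ := √((x - a) * (b - x))

noncomputable def chebyshevSubst (a b θ : ℝ) : ℝ := (a + b) / 2 - (b - a) / 2 * cos θ

section Semicircle

variable {a b : ℝ}

theorem continuous_semicircle : Continuous (semicircle a b) := by
  unfold semicircle; fun_prop

theorem semicircle_left : semicircle a b a = 0 := by simp [semicircle]

theorem semicircle_right : semicircle a b b = 0 := by simp [semicircle]

theorem semicircle_sq {x : ℝ} (hx : x ∈ Icc a b) : semicircle a b x ^ 2 = (x - a) * (b - x) :=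
  sq_sqrt (mul_nonneg (sub_nonneg.2 hx.1) (sub_nonneg.2 hx.2))

theorem semicircle_pos {x : ℝ} (hx : x ∈ Ioo a b) : 0 < semicircle a b x :=
  sqrt_pos.2 (mul_pos (sub_pos.2 hx.1) (sub_pos.2 hx.2))

theorem hasDerivAt_semicircle {x : ℝ} (hx : x ∈ Ioo a b) :
    HasDerivAt (semicircle a b) (((a + b) / 2 - x) / semicircle a b x) x := by
  have hpoly : HasDerivAt (fun x ↦ (x - a) * (b - x)) (a + b - 2 * x) x :=
    (((hasDerivAt_id x).sub_const a).mul ((hasDerivAt_id x).const_sub b)).congr_deriv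
      (by simp only [id]; ring)
  refine (hpoly.sqrt (mul_pos (sub_pos.2 hx.1) (sub_pos.2 hx.2)).ne').congr_deriv ?_
  have hR := (semicircle_pos hx).ne'
  unfold semicircle at hR ⊢
  field_simp

theorem continuous_chebyshevSubst : Continuous (chebyshevSubst a b) := by
  unfold chebyshevSubst; fun_prop

theorem hasDerivAt_chebyshevSubst (θ : ℝ) :
    HasDerivAt (chebyshevSubst a b) ((b - a) / 2 * sin θ) θ :=
  ((hasDerivAt_cos θ).const_mul _).const_sub _ |>.congr_deriv (by ring)

theorem chebyshevSubst_zero : chebyshevSubst a b 0 = a := by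
  rw [chebyshevSubst, cos_zero]; ring

theorem chebyshevSubst_pi : chebyshevSubst a b π = b := by
  rw [chebyshevSubst, cos_pi]; ring

theorem chebyshevSubst_mem_Icc (hab : a ≤ b) (θ : ℝ) : chebyshevSubst a b θ ∈ Icc a b := by
  unfold chebyshevSubst
  constructor <;> nlinarith [neg_one_le_cos θ, cos_le_one θ]

theorem chebyshevSubst_deriv_nonneg (hab : a ≤ b) :
    ∀ θ ∈ Ioo (min 0 π) (max 0 π), 0 ≤ (b - a) / 2 * sin θ := by
  rw [min_eq_left pi_pos.le, max_eq_right pi_pos.le]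
  exact fun θ hθ ↦ mul_nonneg (by linarith) (sin_nonneg_of_nonneg_of_le_pi hθ.1.le hθ.2.le)

theorem semicircle_chebyshevSubst (hab : a ≤ b) {θ : ℝ} (hθ : θ ∈ Icc 0 π) :
    semicircle a b (chebyshevSubst a b θ) = (b - a) / 2 * sin θ := by
  have hsin : 0 ≤ sin θ := sin_nonneg_of_nonneg_of_le_pi hθ.1 hθ.2
  rw [semicircle, chebyshevSubst, ← sqrt_sq (by nlinarith : 0 ≤ (b - a) / 2 * sin θ)]
  congr 1
  linear_combination -(b - a) ^ 2 / 4 * sin_sq_add_cos_sq θ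

theorem div_semicircle_comp_chebyshevSubst_mul_deriv (hab : a < b) (g : ℝ → ℝ) :
    EqOn (fun θ ↦ ((fun x ↦ g x / semicircle a b x) ∘ chebyshevSubst a b) θ * ((b - a) / 2 * sin θ))
      (g ∘ chebyshevSubst a b) (Ioo 0 π) := by
  intro θ hθ
  have hsin : 0 < sin θ := sin_pos_of_pos_of_lt_pi hθ.1 hθ.2
  have hba : 0 < (b - a) / 2 := by linarith
  simp only [Function.comp_apply, semicircle_chebyshevSubst hab.le (Ioo_subset_Icc_self hθ)]
  exact div_mul_cancel₀ _ (mul_pos hba hsin).ne'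

theorem integral_div_semicircle (hab : a < b) (g : ℝ → ℝ) :
    ∫ x in a..b, g x / semicircle a b x = ∫ θ in 0..π, g (chebyshevSubst a b θ) := by
  have hsubst := integral_comp_mul_deriv_of_deriv_nonneg (a := 0) (b := π)
    (g := fun x ↦ g x / semicircle a b x) continuous_chebyshevSubst.continuousOn
    (fun θ _ ↦ hasDerivAt_chebyshevSubst θ) (chebyshevSubst_deriv_nonneg hab.le)
  rw [chebyshevSubst_zero, chebyshevSubst_pi] at hsubst
  rw [← hsubst]
  exact integral_congr_Ioo_of_le pi_pos.le (div_semicircle_comp_chebyshevSubst_mul_deriv hab g)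

theorem intervalIntegrable_div_semicircle (hab : a < b) {g : ℝ → ℝ}
    (hg : ContinuousOn g (Icc a b)) :
    IntervalIntegrable (fun x ↦ g x / semicircle a b x) volume a b := by
  have hsubst := integrable_comp_mul_deriv_iff_of_deriv_nonneg (a := 0) (b := π)
    (g := fun x ↦ g x / semicircle a b x) continuous_chebyshevSubst.continuousOn
    (fun θ _ ↦ hasDerivAt_chebyshevSubst θ) (chebyshevSubst_deriv_nonneg hab.le)
  rw [chebyshevSubst_zero, chebyshevSubst_pi] at hsubst
  rw [← hsubst, intervalIntegrable_congr_uIoo (by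
    rw [uIoo_of_le pi_pos.le]; exact div_semicircle_comp_chebyshevSubst_mul_deriv hab g)]
  exact (hg.comp_continuous continuous_chebyshevSubst
    (chebyshevSubst_mem_Icc hab.le)).intervalIntegrable _ _

theorem integral_comp_inversion (ha : 0 < a) (hab : a ≤ b) (g : ℝ → ℝ) :
    ∫ x in a..b, g (a * b / x) * (a * b / x ^ 2) = ∫ x in a..b, g x := by
  have hsubst := integral_comp_mul_deriv_of_deriv_nonpos (g := g) (f := fun x ↦ a * b / x)
    (f' := fun x ↦ -(a * b / x ^ 2)) (a := a) (b := b)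
    (continuousOn_const.div continuousOn_id fun x hx ↦ by
      rw [uIcc_of_le hab] at hx; exact (ha.trans_le hx.1).ne')
    (fun x hx ↦ by
      rw [min_eq_left hab] at hx
      exact ((hasDerivAt_inv (ha.trans hx.1).ne').const_mul (a * b)).congr_deriv (by field_simp))
    (fun x _ ↦ neg_nonpos.2 (div_nonneg (mul_nonneg ha.le (ha.le.trans hab)) (sq_nonneg x)))
  simpa only [Function.comp_apply, mul_neg, intervalIntegral.integral_neg,
    mul_div_cancel_left₀ b ha.ne', mul_div_cancel_right₀ a (ha.trans_le hab).ne',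
    intervalIntegral.integral_symm a b, neg_inj] using hsubst

theorem semicircle_mul_div {x : ℝ} (hab : 0 ≤ a * b) (hx : 0 < x) :
    semicircle a b (a * b / x) = √(a * b) / x * semicircle a b x := by
  have hdiv : √(a * b) / x = √(a * b / x ^ 2) := by rw [sqrt_div' _ (sq_nonneg x), sqrt_sq hx.le]
  rw [semicircle, semicircle, hdiv, ← sqrt_mul (div_nonneg hab (sq_nonneg x))]
  congr 1
  field_simp

theorem integral_div_mul_semicircle (ha : 0 < a) (hab : a < b) (g : ℝ → ℝ) :
    ∫ x in a..b, g x / (x * semicircle a b x) =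
      (∫ x in a..b, g (a * b / x) / semicircle a b x) / √(a * b) := by
  rw [← integral_comp_inversion ha hab.le, ← intervalIntegral.integral_div]
  refine integral_congr_Ioo_of_le hab.le fun x hx ↦ ?_
  have hx0 : 0 < x := ha.trans hx.1
  have hR := semicircle_pos hx
  have hb : 0 < b := ha.trans hab
  have hsqrt : 0 < √(a * b) := sqrt_pos.2 (mul_pos ha hb)
  rw [semicircle_mul_div (mul_pos ha hb).le hx0]
  field_simp

theorem intervalIntegrable_div_mul_semicircle (ha : 0 < a) (hab : a < b) {g : ℝ → ℝ}
    (hg : ContinuousOn g (Icc a b)) :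
    IntervalIntegrable (fun x ↦ g x / (x * semicircle a b x)) volume a b := by
  simp_rw [← div_div]
  exact intervalIntegrable_div_semicircle hab
    (hg.div continuousOn_id fun x hx ↦ (ha.trans_le hx.1).ne')

theorem integral_one_div_semicircle (hab : a < b) : ∫ x in a..b, 1 / semicircle a b x = π := by
  rw [integral_div_semicircle hab]; simp

theorem integral_semicircle_div_self (ha : 0 < a) (hab : a < b) :
    ∫ x in a..b, semicircle a b x / x = π * ((a + b) / 2 - √(a * b)) := by
  have hsplit : EqOn (fun x ↦ semicircle a b x / x)
      (fun x ↦ (a + b - x) / semicircle a b x - a * b * (1 / (x * semicircle a b x)))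
      (Ioo a b) := by
    intro x hx
    have hx0 : 0 < x := ha.trans hx.1
    have hR := semicircle_pos hx
    have hR2 := semicircle_sq (Ioo_subset_Icc_self hx)
    field_simp
    linear_combination hR2
  have hmean : ∫ θ in 0..π, (a + b - chebyshevSubst a b θ) = π * ((a + b) / 2) := by
    simp_rw [chebyshevSubst, show ∀ θ, a + b - ((a + b) / 2 - (b - a) / 2 * cos θ) =
      (a + b) / 2 + (b - a) / 2 * cos θ from fun θ ↦ by ring]
    rw [intervalIntegral.integral_add intervalIntegrable_const
      (intervalIntegrable_cos.const_mul _), intervalIntegral.integral_const_mul,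
      intervalIntegral.integral_const, integral_cos, sin_pi, sin_zero, smul_eq_mul]
    ring
  rw [integral_congr_Ioo_of_le hab.le hsplit,
    intervalIntegral.integral_sub (intervalIntegrable_div_semicircle hab (by fun_prop))
      ((intervalIntegrable_div_mul_semicircle ha hab continuousOn_const).const_mul _),
    intervalIntegral.integral_const_mul, integral_div_mul_semicircle ha hab,
    integral_one_div_semicircle hab, integral_div_semicircle hab, hmean,
    mul_div_left_comm (a * b), div_sqrt]
  ring

theorem integral_log_mul_deriv_semicircle (ha : 0 < a) (hab : a < b) :
    ∫ x in a..b, log x * (((a + b) / 2 - x) / semicircle a b x) =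
      -∫ x in a..b, semicircle a b x / x := by
  have hne : ∀ x ∈ uIcc a b, x ≠ 0 := fun x hx ↦ by
    rw [uIcc_of_le hab.le] at hx; exact (ha.trans_le hx.1).ne'
  rw [integral_mul_deriv_eq_deriv_mul_of_hasDerivAt (u' := fun x ↦ x⁻¹)
    (continuousOn_log.mono fun x hx ↦ hne x hx) continuous_semicircle.continuousOn
    (fun x hx ↦ hasDerivAt_log (hne x (Ioo_subset_Icc_self hx)))
    (fun x hx ↦ by
      rw [min_eq_left hab.le, max_eq_right hab.le] at hx; exact hasDerivAt_semicircle hx)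
    (intervalIntegrable_inv hne continuousOn_id)
    (intervalIntegrable_div_semicircle hab (by fun_prop))]
  simp [semicircle_left, semicircle_right, inv_mul_eq_div]

theorem integral_log_div_mul_semicircle (ha : 0 < a) (hab : a < b) :
    ∫ x in a..b, log x / (x * semicircle a b x) =
      (π * log (a * b) - ∫ x in a..b, log x / semicircle a b x) / √(a * b) := by
  have hlog : ContinuousOn log (Icc a b) :=
    continuousOn_log.mono fun x hx ↦ (ha.trans_le hx.1).ne'
  have hsplit : EqOn (fun x ↦ log (a * b / x) / semicircle a b x)
      (fun x ↦ log (a * b) * (1 / semicircle a b x) - log x / semicircle a b x) (Ioo a b) := by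
    intro x hx
    dsimp only
    rw [log_div (mul_pos ha (ha.trans hab)).ne' (ha.trans hx.1).ne']
    ring
  rw [integral_div_mul_semicircle ha hab, integral_congr_Ioo_of_le hab.le hsplit,
    intervalIntegral.integral_sub
      ((intervalIntegrable_div_semicircle hab continuousOn_const).const_mul _)
      (intervalIntegrable_div_semicircle hab hlog),
    intervalIntegral.integral_const_mul, integral_one_div_semicircle hab, mul_comm]

theorem integral_log_mul_semicircle_div_self (ha : 0 < a) (hab : a < b) :
    ∫ x in a..b, log x * (semicircle a b x / x) =
      ((a + b) / 2 + √(a * b)) * (∫ θ in 0..π, log (chebyshevSubst a b θ))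
        - π * ((a + b) / 2 - √(a * b)) - π * √(a * b) * log (a * b) := by
  have hlog : ContinuousOn log (Icc a b) :=
    continuousOn_log.mono fun x hx ↦ (ha.trans_le hx.1).ne'
  have hsplit : EqOn (fun x ↦ log x * (semicircle a b x / x))
      (fun x ↦ log x * (((a + b) / 2 - x) / semicircle a b x)
        + (a + b) / 2 * (log x / semicircle a b x) - a * b * (log x / (x * semicircle a b x)))
      (Ioo a b) := by
    intro x hx
    have hx0 : 0 < x := ha.trans hx.1
    have hR := semicircle_pos hx
    have hR2 := semicircle_sq (Ioo_subset_Icc_self hx)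
    field_simp
    linear_combination 2 * log x * hR2
  have hderiv : IntervalIntegrable (fun x ↦ log x * (((a + b) / 2 - x) / semicircle a b x))
      volume a b := by
    simpa only [mul_div_assoc] using
      intervalIntegrable_div_semicircle hab (g := fun x ↦ log x * ((a + b) / 2 - x))
        (hlog.mul (by fun_prop))
  rw [integral_congr_Ioo_of_le hab.le hsplit,
    intervalIntegral.integral_sub
      (hderiv.add ((intervalIntegrable_div_semicircle hab hlog).const_mul _))
      ((intervalIntegrable_div_mul_semicircle ha hab hlog).const_mul _),
    intervalIntegral.integral_add hderiv ((intervalIntegrable_div_semicircle hab hlog).const_mul _),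
    intervalIntegral.integral_const_mul, intervalIntegral.integral_const_mul,
    integral_log_mul_deriv_semicircle ha hab, integral_semicircle_div_self ha hab,
    integral_log_div_mul_semicircle ha hab, ← integral_div_semicircle hab]
  have hsqrt0 : 0 < √(a * b) := sqrt_pos.2 (mul_pos ha (ha.trans hab))
  have hsqrt : √(a * b) ^ 2 = a * b := sq_sqrt (mul_pos ha (ha.trans hab)).le
  generalize ∫ x in a..b, log x / semicircle a b x = J
  set s := √(a * b)
  rw [← hsqrt]
  field_simp
  ring

end Semicircle

theorem integral_log_mul_semicircle_div_self_marchenkoPastur {r : ℝ} (hr0 : 0 < r) (hr1 : r < 1) :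
    ∫ x in (1 - r) ^ 2..(1 + r) ^ 2, log x * (semicircle ((1 - r) ^ 2) ((1 + r) ^ 2) x / x) =
      -(2 * π * r ^ 2) - 2 * π * (1 - r ^ 2) * log (1 - r ^ 2) := by
  have hprod : (1 - r) ^ 2 * (1 + r) ^ 2 = (1 - r ^ 2) ^ 2 := by ring
  have hsubst : ∀ θ, chebyshevSubst ((1 - r) ^ 2) ((1 + r) ^ 2) θ = 1 + r ^ 2 - 2 * r * cos θ :=
    fun θ ↦ by rw [chebyshevSubst]; ring
  rw [integral_log_mul_semicircle_div_self (by nlinarith) (by nlinarith), hprod,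
    sqrt_sq (by nlinarith), log_pow]
  simp_rw [hsubst]
  rw [integral_log_one_add_sq_sub_two_mul_cos (abs_le.2 ⟨by linarith, hr1.le⟩)]
  push_cast
  ring

/-- For `y ∈ (0,1)`, the integral of `log x` against the Marčenko–Pastur density
with parameter `y` equals `((y−1)/y)·log(1−y) − 1`. -/
theorem marchenko_pastur_log_moment (y : ℝ) (hy : 0 < y) (hy1 : y < 1) :
    ∫ x in ((1 - Real.sqrt y) ^ 2)..((1 + Real.sqrt y) ^ 2),
      Real.log x * (Real.sqrt ((x - (1 - Real.sqrt y) ^ 2) * ((1 + Real.sqrt y) ^ 2 - x)) /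
        (2 * Real.pi * x * y)) = (y - 1) / y * Real.log (1 - y) - 1 := by
  have hr0 : 0 < √y := sqrt_pos.2 hy
  have hr1 : √y < 1 := (sqrt_lt' one_pos).2 (by simpa using hy1)
  have hdensity : ∀ x, log x * (√((x - (1 - √y) ^ 2) * ((1 + √y) ^ 2 - x)) / (2 * π * x * y)) =
      (2 * π * y)⁻¹ * (log x * (semicircle ((1 - √y) ^ 2) ((1 + √y) ^ 2) x / x)) := fun x ↦ by
    rw [semicircle]; ring
  simp_rw [hdensity]
  rw [intervalIntegral.integral_const_mul,
    integral_log_mul_semicircle_div_self_marchenkoPastur hr0 hr1, sq_sqrt hy.le]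
  have h1y : 1 - y ≠ 0 := by linarith
  field_simp
  ring
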